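/- Let φ, ψ ∈ C^∞_0(R^3), and for N ≥ 1 define f_N, g_N on H^3 by f_N(x) = N^{1/2} φ(N Ψ_I^{-1}(x)), g_N(x) = N^{1/2} ψ(N Ψ_I^{-1}(x)). Then lim_{N→∞} ∫_{H^3} ⟨∇_g f_N, ∇_g ḡ_N⟩ dμ = ∫_{R^3} ∇φ(x) · ∇ψ̄(x) dx. -/

import Mathlib

open MeasureTheory Real Filter

noncomputable section

abbrev E3 := EuclideanSpace ℝ (Fin 3)

/-- The rescaled concentrating profile `f_N(Ψ_I v) = N^{1/2} φ(N v)` in the chart. -/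
def resc (φ : E3 → ℂ) (N : ℝ) (v : E3) : ℂ :=
  ((N ^ ((1 : ℝ) / 2) : ℝ) : ℂ) * φ (N • v)

/-- The integrand after the change of variables `x = N v`. -/
def Gfun (φ ψ : E3 → ℂ) (N : ℝ) (x : E3) : ℂ :=
  (∑ i : Fin 3, ∑ j : Fin 3,
    (((if i = j then (1:ℝ) else 0) + (N⁻¹ * x i) * (N⁻¹ * x j) : ℝ) : ℂ) *
      fderiv ℝ φ x (EuclideanSpace.single i 1) *
      (starRingEnd ℂ) (fderiv ℝ ψ x (EuclideanSpace.single j 1))) *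
    (((1 + ‖N⁻¹ • x‖ ^ 2) ^ (-(1:ℝ)/2) : ℝ) : ℂ)

lemma coord_le (x : E3) (i : Fin 3) : |x i| ≤ ‖x‖ := by
  rw [EuclideanSpace.norm_eq, ← Real.sqrt_sq_eq_abs]
  apply Real.sqrt_le_sqrt
  calc (x i)^2 = ‖x i‖^2 := by rw [Real.norm_eq_abs, sq_abs]
  _ ≤ ∑ j, ‖x j‖^2 := Finset.single_le_sum (f := fun j => ‖x j‖^2)
      (fun j _ => sq_nonneg _) (Finset.mem_univ i)

lemma fderiv_resc_apply (φ : E3 → ℂ) (hφ : Differentiable ℝ φ) (N : ℝ) (v w : E3) :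
    fderiv ℝ (resc φ N) v w
      = ((N ^ ((1:ℝ)/2) * N : ℝ) : ℂ) * fderiv ℝ φ (N • v) w := by
  have h1 : HasFDerivAt (fun v : E3 => N • v) (N • ContinuousLinearMap.id ℝ E3) v := by
    exact (N • ContinuousLinearMap.id ℝ E3).hasFDerivAt (x := v)
  have h2 : HasFDerivAt (fun v : E3 => φ (N • v))
      ((fderiv ℝ φ (N • v)).comp (N • ContinuousLinearMap.id ℝ E3)) v :=
    ((hφ (N • v)).hasFDerivAt).comp v h1
  have hre : resc φ N = fun v => (((N ^ ((1:ℝ)/2) : ℝ) : ℂ)) • φ (N • v) := by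
    funext v; simp [resc, smul_eq_mul]
  rw [hre, HasFDerivAt.fderiv (f := fun v => (((N ^ ((1:ℝ)/2) : ℝ) : ℂ)) • φ (N • v))
    (h2.const_smul (((N ^ ((1:ℝ)/2) : ℝ) : ℂ)))]
  simp only [ContinuousLinearMap.smul_apply, ContinuousLinearMap.comp_apply,
    ContinuousLinearMap.smul_apply, ContinuousLinearMap.id_apply, _root_.map_smul,
    smul_eq_mul, Complex.real_smul, Complex.ofReal_mul]
  ring

lemma ptwise (φ ψ : E3 → ℂ) (hφd : Differentiable ℝ φ) (hψd : Differentiable ℝ ψ)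
    {N : ℝ} (hN : 1 ≤ N) (v : E3) :
    (∑ i : Fin 3, ∑ j : Fin 3,
      ((((if i = j then (1 : ℝ) else 0) + v i * v j) : ℝ) : ℂ) *
        (fderiv ℝ (resc φ N) v (EuclideanSpace.single i 1)) *
        (starRingEnd ℂ) (fderiv ℝ (resc ψ N) v (EuclideanSpace.single j 1)))
      * ((((1 + ‖v‖ ^ 2) ^ (-(1 : ℝ) / 2) : ℝ)) : ℂ)
    = (N ^ 3 : ℝ) • Gfun φ ψ N (N • v) := by
  have hN0 : (0:ℝ) < N := lt_of_lt_of_le one_pos hN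
  have h : N ^ ((1:ℝ)/2) * N ^ ((1:ℝ)/2) = N := by
    rw [← Real.rpow_add hN0]; norm_num
  have hc : (N ^ ((1:ℝ)/2) * N) * (N ^ ((1:ℝ)/2) * N) = N ^ 3 := by
    calc (N ^ ((1:ℝ)/2) * N) * (N ^ ((1:ℝ)/2) * N)
        = (N ^ ((1:ℝ)/2) * N ^ ((1:ℝ)/2)) * (N * N) := by ring
      _ = N * (N * N) := by rw [h]
      _ = N ^ 3 := by ring
  simp only [fderiv_resc_apply φ hφd, fderiv_resc_apply ψ hψd, Gfun]
  rw [inv_smul_smul₀ hN0.ne']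
  simp only [PiLp.smul_apply, smul_eq_mul, inv_mul_cancel_left₀ hN0.ne']
  rw [Complex.real_smul, ← mul_assoc]
  congr 1
  rw [Finset.mul_sum]
  refine Finset.sum_congr rfl fun i _ => ?_
  rw [Finset.mul_sum]
  refine Finset.sum_congr rfl fun j _ => ?_
  simp only [map_mul, Complex.conj_ofReal]
  rw [← hc]
  push_cast
  ring

lemma integral_key (φ ψ : E3 → ℂ) (hφd : Differentiable ℝ φ) (hψd : Differentiable ℝ ψ)
    {N : ℝ} (hN : 1 ≤ N) :
    (∫ v : E3,
        (∑ i : Fin 3, ∑ j : Fin 3,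
          ((((if i = j then (1 : ℝ) else 0) + v i * v j) : ℝ) : ℂ) *
            (fderiv ℝ (resc φ N) v (EuclideanSpace.single i 1)) *
            (starRingEnd ℂ) (fderiv ℝ (resc ψ N) v (EuclideanSpace.single j 1)))
          * ((((1 + ‖v‖ ^ 2) ^ (-(1 : ℝ) / 2) : ℝ)) : ℂ))
      = ∫ x : E3, Gfun φ ψ N x := by
  have hN0 : (0:ℝ) < N := lt_of_lt_of_le one_pos hN
  rw [show (fun v : E3 =>
        (∑ i : Fin 3, ∑ j : Fin 3,
          ((((if i = j then (1 : ℝ) else 0) + v i * v j) : ℝ) : ℂ) *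
            (fderiv ℝ (resc φ N) v (EuclideanSpace.single i 1)) *
            (starRingEnd ℂ) (fderiv ℝ (resc ψ N) v (EuclideanSpace.single j 1)))
          * ((((1 + ‖v‖ ^ 2) ^ (-(1 : ℝ) / 2) : ℝ)) : ℂ))
      = fun v => (N ^ 3 : ℝ) • Gfun φ ψ N (N • v) from
    funext (ptwise φ ψ hφd hψd hN)]
  rw [integral_smul, Measure.integral_comp_smul_of_nonneg volume (Gfun φ ψ N) N (hR := hN0.le),
    finrank_euclideanSpace_fin, smul_smul, mul_inv_cancel₀ (by positivity), one_smul]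

lemma Gfun_continuous (φ ψ : E3 → ℂ) (hφ : ContDiff ℝ (⊤ : ℕ∞) φ) (hψ : ContDiff ℝ (⊤ : ℕ∞) ψ) (N : ℝ) :
    Continuous (Gfun φ ψ N) := by
  have hφ' : Continuous (fderiv ℝ φ) := hφ.continuous_fderiv (by simp)
  have hψ' : Continuous (fderiv ℝ ψ) := hψ.continuous_fderiv (by simp)
  apply Continuous.mul
  · apply continuous_finset_sum; intro i _
    apply continuous_finset_sum; intro j _
    exact ((Complex.continuous_ofReal.comp (by fun_prop)).mul
      (hφ'.clm_apply continuous_const)).mul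
      (Complex.continuous_conj.comp (hψ'.clm_apply continuous_const))
  · apply Complex.continuous_ofReal.comp
    apply Continuous.rpow_const
    · fun_prop
    · intro x; left; positivity

lemma Gfun_bound (φ ψ : E3 → ℂ) (R N : ℝ) (hR : tsupport φ ⊆ Metric.closedBall 0 R)
    (hR0 : 0 ≤ R) (hN : 1 ≤ N) (x : E3) :
    ‖Gfun φ ψ N x‖ ≤ ∑ i : Fin 3, ∑ j : Fin 3, (1 + R^2) *
      (‖fderiv ℝ φ x (EuclideanSpace.single i 1)‖ *
        ‖fderiv ℝ ψ x (EuclideanSpace.single j 1)‖) := by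
  have hN0 : (0:ℝ) < N := lt_of_lt_of_le one_pos hN
  rw [Gfun, norm_mul]
  have hw : ‖((((1 + ‖N⁻¹ • x‖ ^ 2) ^ (-(1:ℝ)/2) : ℝ)) : ℂ)‖ ≤ 1 := by
    rw [Complex.norm_real, Real.norm_eq_abs,
      abs_of_nonneg (Real.rpow_nonneg (by positivity) _)]
    apply Real.rpow_le_one_of_one_le_of_nonpos
    · nlinarith [sq_nonneg ‖N⁻¹ • x‖]
    · norm_num
  calc _ ≤ ‖∑ i : Fin 3, ∑ j : Fin 3,
        (((if i = j then (1:ℝ) else 0) + (N⁻¹ * x i) * (N⁻¹ * x j) : ℝ) : ℂ) *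
          fderiv ℝ φ x (EuclideanSpace.single i 1) *
          (starRingEnd ℂ) (fderiv ℝ ψ x (EuclideanSpace.single j 1))‖ * 1 := by
        gcongr
    _ = _ := mul_one _
    _ ≤ _ := by
        refine (norm_sum_le _ _).trans (Finset.sum_le_sum fun i _ => ?_)
        refine (norm_sum_le _ _).trans (Finset.sum_le_sum fun j _ => ?_)
        rw [norm_mul, norm_mul, RCLike.norm_conj]
        by_cases hx : x ∈ tsupport φ
        · have h1 : |x i| ≤ R := (coord_le x i).trans (by
            simpa [Real.norm_eq_abs] using mem_closedBall_zero_iff.mp (hR hx))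
          have h2 : |x j| ≤ R := (coord_le x j).trans (by
            simpa [Real.norm_eq_abs] using mem_closedBall_zero_iff.mp (hR hx))
          have hNi : |N⁻¹| ≤ 1 := by
            rw [abs_of_nonneg (by positivity)]
            exact inv_le_one_of_one_le₀ hN
          have : ‖(((if i = j then (1:ℝ) else 0) + (N⁻¹ * x i) * (N⁻¹ * x j) : ℝ) : ℂ)‖
              ≤ 1 + R^2 := by
            rw [Complex.norm_real, Real.norm_eq_abs]
            calc |((if i = j then (1:ℝ) else 0) + (N⁻¹ * x i) * (N⁻¹ * x j))|
                ≤ |(if i = j then (1:ℝ) else 0)| + |(N⁻¹ * x i) * (N⁻¹ * x j)| := abs_add_le _ _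
              _ ≤ 1 + R^2 := by
                  gcongr
                  · split <;> simp
                  · rw [abs_mul, abs_mul, abs_mul]
                    have hh : |N⁻¹| * |x i| * (|N⁻¹| * |x j|) ≤ 1 * R * (1 * R) := by
                      gcongr <;> assumption
                    nlinarith [hh]
          rw [mul_assoc]
          exact mul_le_mul_of_nonneg_right this (by positivity)
        · have : fderiv ℝ φ x = 0 := by
            have := support_fderiv_subset ℝ (f := φ)
            by_contra h
            exact hx (this (by simpa [Function.mem_support] using h))
          simp only [this, ContinuousLinearMap.zero_apply, norm_zero, mul_zero, zero_mul]
          positivity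

lemma Gfun_tendsto (φ ψ : E3 → ℂ) (x : E3) :
    Tendsto (fun N : ℝ => Gfun φ ψ N x) atTop
      (nhds (∑ i : Fin 3, fderiv ℝ φ x (EuclideanSpace.single i 1) *
        (starRingEnd ℂ) (fderiv ℝ ψ x (EuclideanSpace.single i 1)))) := by
  set Φ : ℝ → ℂ := fun t =>
    (∑ i : Fin 3, ∑ j : Fin 3,
      (((if i = j then (1:ℝ) else 0) + (t * x i) * (t * x j) : ℝ) : ℂ) *
        fderiv ℝ φ x (EuclideanSpace.single i 1) *
        (starRingEnd ℂ) (fderiv ℝ ψ x (EuclideanSpace.single j 1))) *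
      (((1 + ‖t • x‖ ^ 2) ^ (-(1:ℝ)/2) : ℝ) : ℂ) with hΦ
  have hc0 : ContinuousAt Φ 0 := by
    apply ContinuousAt.mul
    · apply Continuous.continuousAt
      apply continuous_finset_sum; intro i _
      apply continuous_finset_sum; intro j _
      exact ((Complex.continuous_ofReal.comp (by fun_prop)).mul continuous_const).mul
        continuous_const
    · apply Complex.continuous_ofReal.continuousAt.comp
      apply ContinuousAt.rpow_const
      · exact continuousAt_const.add
          (((continuousAt_id.smul continuousAt_const)).norm.pow 2)
      · left; simp
  have h0 : Φ 0 = ∑ i : Fin 3, fderiv ℝ φ x (EuclideanSpace.single i 1) *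
      (starRingEnd ℂ) (fderiv ℝ ψ x (EuclideanSpace.single i 1)) := by
    simp [hΦ, Real.one_rpow, apply_ite (fun r : ℝ => (r : ℂ)), ite_mul,
      Finset.sum_ite_eq, Finset.mem_univ]
  have := hc0.tendsto.comp (tendsto_inv_atTop_zero (𝕜 := ℝ))
  rw [h0] at this
  exact this

/-- For `φ, ψ ∈ C_c^∞(ℝ³)` and `f_N = N^{1/2} φ(N Ψ_I⁻¹ ·)`, `g_N = N^{1/2} ψ(N Ψ_I⁻¹ ·)`,
the hyperbolic Dirichlet inner products converge to the Euclidean one: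
`∫_{H³} ⟨∇_g f_N, ∇_g ḡ_N⟩ dμ → ∫_{ℝ³} ∇φ·∇ψ̄ dx` as `N → ∞`.  Everything is written
in the chart `Ψ_I`: the measure is `(1+|v|²)^{-1/2} dv` and
`⟨∇_g f, ∇_g ḡ⟩ = Σ_{ij} (δ_{ij}+v_iv_j) ∂_i f ∂_j ḡ`. -/
theorem stmt12 (φ ψ : E3 → ℂ) (hφ : ContDiff ℝ (⊤ : ℕ∞) φ) (hφs : HasCompactSupport φ)
    (hψ : ContDiff ℝ (⊤ : ℕ∞) ψ) (hψs : HasCompactSupport ψ) :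
    Filter.Tendsto
      (fun N : ℝ => ∫ v : E3,
        (∑ i : Fin 3, ∑ j : Fin 3,
          ((((if i = j then (1 : ℝ) else 0) + v i * v j) : ℝ) : ℂ) *
            (fderiv ℝ (resc φ N) v (EuclideanSpace.single i 1)) *
            (starRingEnd ℂ) (fderiv ℝ (resc ψ N) v (EuclideanSpace.single j 1)))
          * ((((1 + ‖v‖ ^ 2) ^ (-(1 : ℝ) / 2) : ℝ)) : ℂ))
      Filter.atTop
      (nhds (∫ x : E3, ∑ i : Fin 3,
        (fderiv ℝ φ x (EuclideanSpace.single i 1)) *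
          (starRingEnd ℂ) (fderiv ℝ ψ x (EuclideanSpace.single i 1)))) := by
  have hφd : Differentiable ℝ φ := hφ.differentiable (by simp)
  have hψd : Differentiable ℝ ψ := hψ.differentiable (by simp)
  have hφ' : Continuous (fderiv ℝ φ) := hφ.continuous_fderiv (by simp)
  have hψ' : Continuous (fderiv ℝ ψ) := hψ.continuous_fderiv (by simp)
  obtain ⟨R₀, hR₀⟩ := hφs.isBounded.subset_closedBall (0 : E3)
  set R : ℝ := max R₀ 0 with hRdef
  have hR : tsupport φ ⊆ Metric.closedBall 0 R :=
    hR₀.trans (Metric.closedBall_subset_closedBall (le_max_left _ _))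
  have hR0 : 0 ≤ R := le_max_right _ _
  set bound : E3 → ℝ := fun x => ∑ i : Fin 3, ∑ j : Fin 3, (1 + R^2) *
      (‖fderiv ℝ φ x (EuclideanSpace.single i 1)‖ *
        ‖fderiv ℝ ψ x (EuclideanSpace.single j 1)‖) with hbdef
  have hbc : Continuous bound := by
    apply continuous_finset_sum; intro i _
    apply continuous_finset_sum; intro j _
    exact continuous_const.mul
      (((hφ'.clm_apply continuous_const).norm).mul ((hψ'.clm_apply continuous_const).norm))
  have hbs : HasCompactSupport bound := by
    apply HasCompactSupport.intro hφs
    intro x hx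
    have : fderiv ℝ φ x = 0 := by
      have := support_fderiv_subset ℝ (f := φ)
      by_contra h
      exact hx (this (by simpa [Function.mem_support] using h))
    simp [hbdef, this]
  have hbi : Integrable bound := hbc.integrable_of_hasCompactSupport hbs
  have main := tendsto_integral_filter_of_dominated_convergence (μ := (volume : Measure E3))
    (F := fun N : ℝ => Gfun φ ψ N) bound
    (Eventually.of_forall fun N => (Gfun_continuous φ ψ hφ hψ N).aestronglyMeasurable)
    (by
      filter_upwards [eventually_ge_atTop (1:ℝ)] with N hN
      exact Eventually.of_forall fun x => Gfun_bound φ ψ R N hR hR0 hN x)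
    hbi
    (Eventually.of_forall fun x => Gfun_tendsto φ ψ x)
  apply main.congr'
  filter_upwards [eventually_ge_atTop (1:ℝ)] with N hN
  exact (integral_key φ ψ hφd hψd hN).symm

end
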